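/- arXiv:2403.09342 — 3 statements merged into one kernel-verified Lean document; each statement's English description precedes it below -/
import Mathlib

section
/- For the two-qudit GHZ state ρ_ghz = |GHZ⟩⟨GHZ| on ℂ^d⊗ℂ^d (d ≥ 2), where |GHZ⟩ = (1/√d)Σ_{k=1}^{d}|k⟩⊗|k⟩ in the standard basis, the geometric quantum discord equals D_g(ρ_ghz) = (d−1)/d. -/
open Matrix Finset
open scoped Kronecker ComplexOrder

noncomputable section

/-- A quantum state: a positive semidefinite (hence Hermitian) matrix of trace 1. -/
def IsState {n : Type*} [Fintype n] (ρ : Matrix n n ℂ) : Prop :=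
  ρ.PosSemidef ∧ ρ.trace = 1

/-- The pure state (rank-one projection) associated with a vector `ψ`. -/
def pureState {n : Type*} (ψ : n → ℂ) : Matrix n n ℂ :=
  Matrix.vecMulVec ψ (star ψ)

/-- A Bloch basis for `d × d` complex matrices: a family of nonzero traceless Hermitian
matrices with `tr[Υ k * Υ m] = 2 δ_{km}`. -/
def IsBlochBasis (d : ℕ) (Υ : Fin (d ^ 2 - 1) → Matrix (Fin d) (Fin d) ℂ) : Prop :=
  (∀ k, Υ k ≠ 0) ∧ (∀ k, (Υ k).IsHermitian) ∧ (∀ k, (Υ k).trace = 0) ∧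
    (∀ k m, (Υ k * Υ m).trace = if k = m then 2 else 0)

/-- The Bloch vector of a state `ρ` on `ℂ^d` relative to a Bloch basis `Υ`. -/
def blochVector {d : ℕ} (ρ : Matrix (Fin d) (Fin d) ℂ)
    (Υ : Fin (d ^ 2 - 1) → Matrix (Fin d) (Fin d) ℂ) : Fin (d ^ 2 - 1) → ℝ :=
  fun k => Real.sqrt ((d : ℝ) / (2 * ((d : ℝ) - 1))) * ((ρ * Υ k).trace).re

/-- Partial trace over the first tensor factor. -/
def ptrace1 {d₁ d₂ : ℕ} (ρ : Matrix (Fin d₁ × Fin d₂) (Fin d₁ × Fin d₂) ℂ) :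
    Matrix (Fin d₂) (Fin d₂) ℂ :=
  Matrix.of fun j j' => ∑ i, ρ (i, j) (i, j')

/-- Partial trace over the second tensor factor. -/
def ptrace2 {d₁ d₂ : ℕ} (ρ : Matrix (Fin d₁ × Fin d₂) (Fin d₁ × Fin d₂) ℂ) :
    Matrix (Fin d₁) (Fin d₁) ℂ :=
  Matrix.of fun i i' => ∑ j, ρ (i, j) (i', j)

/-- Partial transpose with respect to the second tensor factor. -/
def ptranspose2 {d₁ d₂ : ℕ} (ρ : Matrix (Fin d₁ × Fin d₂) (Fin d₁ × Fin d₂) ℂ) :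
    Matrix (Fin d₁ × Fin d₂) (Fin d₁ × Fin d₂) ℂ :=
  Matrix.of fun p q => ρ (p.1, q.2) (q.1, p.2)

/-- The correlation matrix of a two-qudit state, `T^{ij} = tr[ρ (Υ₁ i ⊗ Υ₂ j)]`. -/
def corrMatrix {d₁ d₂ : ℕ} (ρ : Matrix (Fin d₁ × Fin d₂) (Fin d₁ × Fin d₂) ℂ)
    (Υ₁ : Fin (d₁ ^ 2 - 1) → Matrix (Fin d₁) (Fin d₁) ℂ)
    (Υ₂ : Fin (d₂ ^ 2 - 1) → Matrix (Fin d₂) (Fin d₂) ℂ) :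
    Matrix (Fin (d₁ ^ 2 - 1)) (Fin (d₂ ^ 2 - 1)) ℝ :=
  Matrix.of fun i j => ((ρ * (Υ₁ i ⊗ₖ Υ₂ j)).trace).re

/-- A quantum-classical state `χ = Σ_k α_k σ_k ⊗ |k⟩⟨k|`. -/
def IsQCState {d₁ d₂ : ℕ} (χ : Matrix (Fin d₁ × Fin d₂) (Fin d₁ × Fin d₂) ℂ) : Prop :=
  ∃ (α : Fin d₂ → ℝ) (σ : Fin d₂ → Matrix (Fin d₁) (Fin d₁) ℂ) (e : Fin d₂ → Fin d₂ → ℂ),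
    (∀ k, 0 ≤ α k) ∧ (∑ k, α k = 1) ∧ (∀ k, IsState (σ k)) ∧
    (∀ k l, ∑ i, star (e k i) * e l i = if k = l then (1 : ℂ) else 0) ∧
    χ = ∑ k, (α k : ℂ) • (σ k ⊗ₖ pureState (e k))

/-- The geometric quantum discord (with the Hilbert–Schmidt distance):
`D_g(ρ) = min over quantum-classical χ of tr[(ρ - χ)²]`. -/
def Dg {d₁ d₂ : ℕ} (ρ : Matrix (Fin d₁ × Fin d₂) (Fin d₁ × Fin d₂) ℂ) : ℝ :=
  sInf {x : ℝ | ∃ χ, IsQCState χ ∧ x = (((ρ - χ) * (ρ - χ)).trace).re}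

/-- `η` lists the eigenvalues of the real matrix `G` in decreasing order with algebraic
multiplicities: `η` is antitone and the characteristic polynomial of `G` splits as
`∏ (X - η n)`. -/
def IsEigList {N : ℕ} (G : Matrix (Fin N) (Fin N) ℝ) (η : Fin N → ℝ) : Prop :=
  Antitone η ∧ G.charpoly = ∏ n, (Polynomial.X - Polynomial.C (η n))

/-- A simplex frame in `ℝ^N`: `d` unit vectors summing to zero with pairwise scalar
products `-1/(d-1)`. -/
def IsSimplexFrame {N : ℕ} (d : ℕ) (y : Fin d → Fin N → ℝ) : Prop :=
  (∀ k, ∑ i, y k i ^ 2 = 1) ∧ (∀ i, ∑ k, y k i = 0) ∧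
    (∀ j k, j ≠ k → ∑ i, y j i * y k i = -1 / ((d : ℝ) - 1))

/-- The operator `Π_{Ω_y} = ((d-1)/d) Σ_k y_k y_kᵀ` associated with a simplex frame. -/
def simplexProj {N : ℕ} (d : ℕ) (y : Fin d → Fin N → ℝ) : Matrix (Fin N) (Fin N) ℝ :=
  (((d : ℝ) - 1) / d) • ∑ k, Matrix.vecMulVec (y k) (y k)

/-- The matrix `G(ρ) = ((d₂-1)/(d₁ d₂)) r₂ r₂ᵀ + (1/4) T_ρᵀ T_ρ`. -/
def Gmat {d₁ d₂ : ℕ} (ρ : Matrix (Fin d₁ × Fin d₂) (Fin d₁ × Fin d₂) ℂ)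
    (Υ₁ : Fin (d₁ ^ 2 - 1) → Matrix (Fin d₁) (Fin d₁) ℂ)
    (Υ₂ : Fin (d₂ ^ 2 - 1) → Matrix (Fin d₂) (Fin d₂) ℂ) :
    Matrix (Fin (d₂ ^ 2 - 1)) (Fin (d₂ ^ 2 - 1)) ℝ :=
  (((d₂ : ℝ) - 1) / (d₁ * d₂)) •
      Matrix.vecMulVec (blochVector (ptrace1 ρ) Υ₂) (blochVector (ptrace1 ρ) Υ₂)
    + (4 : ℝ)⁻¹ • ((corrMatrix ρ Υ₁ Υ₂)ᵀ * corrMatrix ρ Υ₁ Υ₂)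

/-- The trace norm (sum of singular values) of a complex square matrix. -/
def traceNorm {n : Type*} [Fintype n] [DecidableEq n] (X : Matrix n n ℂ) : ℝ :=
  ∑ i, Real.sqrt ((Matrix.posSemidef_conjTranspose_mul_self X).1.eigenvalues i)

/-- The negativity `N_ρ = (‖ρ^{T₂}‖₁ - 1)/2`. -/
def negativity {d₁ d₂ : ℕ} (ρ : Matrix (Fin d₁ × Fin d₂) (Fin d₁ × Fin d₂) ℂ) : ℝ :=
  (traceNorm (ptranspose2 ρ) - 1) / 2

/-- The concurrence of a pure two-qudit state, `C = √(2 (1 - tr[ρ₁²]))`, `ρ₁ = tr₂ ρ`. -/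
def concurrence {d₁ d₂ : ℕ} (ρ : Matrix (Fin d₁ × Fin d₂) (Fin d₁ × Fin d₂) ℂ) : ℝ :=
  Real.sqrt (2 * (1 - ((ptrace2 ρ * ptrace2 ρ).trace).re))

end

/-! The transpose trick `⟨GHZ| A ⊗ B |GHZ⟩ = tr(A Bᵀ) / d` and the orthonormality of the `e_k`
give, for `χ = Σ_k α_k σ_k ⊗ |e_k⟩⟨e_k|`, the exact identity
`tr[(ρ - χ)²] = (d - 1)/d + Σ_k tr[(α_k σ_k - |e_k⟩⟨e_k|ᵀ / d)²]`.
Each summand is the square of a Hermitian matrix, hence nonnegative, and all of them vanish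
for `α_k = 1/d`, `σ_k = |e_k⟩⟨e_k|ᵀ`. -/

def IsOrthonormal {ι m : Type*} [Fintype m] [DecidableEq ι] (e : ι → m → ℂ) : Prop :=
  ∀ k l, star (e k) ⬝ᵥ e l = if k = l then 1 else 0

def qcState {ι n m : Type*} [Fintype ι] (α : ι → ℝ) (σ : ι → Matrix n n ℂ) (e : ι → m → ℂ) :
    Matrix (n × m) (n × m) ℂ :=
  ∑ k, (α k : ℂ) • (σ k ⊗ₖ pureState (e k))

section General

variable {n m ι : Type*} [Fintype n] [Fintype m] [Fintype ι]

lemma trace_pureState_mul_pureState (u v : n → ℂ) :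
    (pureState u * pureState v).trace = (star u ⬝ᵥ v) * (star v ⬝ᵥ u) := by
  rw [pureState, pureState, vecMulVec_mul_vecMulVec, trace_vecMulVec, dotProduct_smul,
    smul_eq_mul, dotProduct_comm u]

lemma isState_pureState {u : n → ℂ} (hu : star u ⬝ᵥ u = 1) : IsState (pureState u) :=
  ⟨posSemidef_vecMulVec_self_star u, by rw [pureState, trace_vecMulVec, dotProduct_comm, hu]⟩

lemma IsState.transpose {ρ : Matrix n n ℂ} (hρ : IsState ρ) : IsState ρᵀ :=
  ⟨hρ.1.transpose, by rw [trace_transpose, hρ.2]⟩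

lemma Matrix.IsHermitian.re_trace_mul_self_nonneg {A : Matrix n n ℂ} (hA : A.IsHermitian) :
    0 ≤ (A * A).trace.re := by
  nth_rewrite 1 [← hA]
  exact (Complex.nonneg_iff.mp (posSemidef_conjTranspose_mul_self A).trace_nonneg).1

lemma isOrthonormal_single [DecidableEq n] : IsOrthonormal (fun k : n => (Pi.single k 1 : n → ℂ)) :=
  fun k l => by
    rw [Pi.star_single, star_one, single_one_dotProduct]
    exact Pi.single_apply ..

lemma trace_pureState_diag_mul_kronecker [DecidableEq n] (c : ℂ) (A B : Matrix n n ℂ) :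
    (pureState (fun p : n × n => if p.1 = p.2 then c else 0) * (A ⊗ₖ B)).trace
      = c * star c * (A * Bᵀ).trace := by
  simp only [trace, pureState, diag_apply, mul_apply, vecMulVec_apply, Pi.star_apply,
    apply_ite star, star_zero, mul_ite, ite_mul, zero_mul, mul_zero, kroneckerMap_apply,
    Fintype.sum_prod_type, sum_ite_eq, mem_univ, if_true, sum_ite_irrel, sum_const_zero,
    transpose_apply, mul_sum]
  exact sum_comm

lemma trace_sq_sum_kronecker_pureState [DecidableEq ι] (X : ι → Matrix n n ℂ) {e : ι → m → ℂ}
    (he : IsOrthonormal e) :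
    ((∑ k, X k ⊗ₖ pureState (e k)) * ∑ k, X k ⊗ₖ pureState (e k)).trace
      = ∑ k, (X k * X k).trace := by
  unfold IsOrthonormal at he
  simp_rw [sum_mul_sum, trace_sum, ← mul_kronecker_mul, trace_kronecker,
    trace_pureState_mul_pureState, he]
  simp

end General

noncomputable def ghz (d : ℕ) : Fin d × Fin d → ℂ :=
  fun p => if p.1 = p.2 then (((Real.sqrt d)⁻¹ : ℝ) : ℂ) else 0

section GHZ

variable {d : ℕ}

lemma ghz_coeff_mul_star :
    (((Real.sqrt d)⁻¹ : ℝ) : ℂ) * star (((Real.sqrt d)⁻¹ : ℝ) : ℂ) = (d : ℂ)⁻¹ := by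
  rw [Complex.star_def, Complex.conj_ofReal, ← Complex.ofReal_mul, ← mul_inv,
    Real.mul_self_sqrt d.cast_nonneg, Complex.ofReal_inv, Complex.ofReal_natCast]

lemma star_ghz_dotProduct_ghz (hd : 0 < d) : star (ghz d) ⬝ᵥ ghz d = 1 := by
  simp only [dotProduct, Fintype.sum_prod_type, Pi.star_apply, ghz, apply_ite star, star_zero,
    mul_ite, mul_zero, ite_mul, zero_mul, sum_ite_eq, mem_univ, if_true, sum_const, card_univ,
    Fintype.card_fin, nsmul_eq_mul]
  rw [mul_comm (star _), ghz_coeff_mul_star]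
  exact mul_inv_cancel₀ (by exact_mod_cast hd.ne')

lemma trace_ghz_mul_ghz (hd : 0 < d) : (pureState (ghz d) * pureState (ghz d)).trace = 1 := by
  rw [trace_pureState_mul_pureState, star_ghz_dotProduct_ghz hd, one_mul]

lemma trace_ghz_mul_kronecker (A B : Matrix (Fin d) (Fin d) ℂ) :
    (pureState (ghz d) * (A ⊗ₖ B)).trace = (d : ℂ)⁻¹ * (A * Bᵀ).trace := by
  unfold ghz
  rw [trace_pureState_diag_mul_kronecker, ghz_coeff_mul_star]

lemma trace_ghz_mul_sum_kronecker {ι : Type*} [Fintype ι] (A B : ι → Matrix (Fin d) (Fin d) ℂ) :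
    (pureState (ghz d) * ∑ k, A k ⊗ₖ B k).trace = (d : ℂ)⁻¹ * ∑ k, (A k * (B k)ᵀ).trace := by
  simp_rw [mul_sum, trace_sum, trace_ghz_mul_kronecker]

lemma trace_sq_ghz_sub_sum_kronecker (hd : 0 < d) (X : Fin d → Matrix (Fin d) (Fin d) ℂ)
    {e : Fin d → Fin d → ℂ} (he : IsOrthonormal e) :
    ((pureState (ghz d) - ∑ k, X k ⊗ₖ pureState (e k)) *
        (pureState (ghz d) - ∑ k, X k ⊗ₖ pureState (e k))).trace
      = ((d : ℂ) - 1) / d + ∑ k, ((X k - (d : ℂ)⁻¹ • (pureState (e k))ᵀ) *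
          (X k - (d : ℂ)⁻¹ • (pureState (e k))ᵀ)).trace := by
  have hρχ := trace_ghz_mul_sum_kronecker X (fun k => pureState (e k))
  set ρ := pureState (ghz d)
  set χ := ∑ k, X k ⊗ₖ pureState (e k)
  have hP : ∀ k, ((pureState (e k))ᵀ * (pureState (e k))ᵀ).trace = 1 := fun k => by
    rw [← transpose_mul, trace_transpose, trace_pureState_mul_pureState, he, if_pos rfl, one_mul]
  have hd' : (d : ℂ) ≠ 0 := by exact_mod_cast hd.ne'
  calc ((ρ - χ) * (ρ - χ)).trace = (ρ * ρ).trace - 2 * (ρ * χ).trace + (χ * χ).trace := by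
        simp only [sub_mul, mul_sub, trace_sub, trace_mul_comm χ ρ]
        ring
    _ = 1 - 2 * (d : ℂ)⁻¹ * ∑ k, (X k * (pureState (e k))ᵀ).trace + ∑ k, (X k * X k).trace := by
        rw [trace_ghz_mul_ghz hd, hρχ, trace_sq_sum_kronecker_pureState X he]
        ring
    _ = _ := by
        simp only [sub_mul, mul_sub, Matrix.smul_mul, Matrix.mul_smul, trace_sub, trace_smul, hP,
          trace_mul_comm _ (X _), sum_sub_distrib, smul_eq_mul, ← mul_sum, sum_const, card_univ,
          Fintype.card_fin]
        field_simp
        ring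

lemma sub_one_div_le_re_trace_sq_ghz_sub_qcState (hd : 0 < d) (α : Fin d → ℝ)
    {σ : Fin d → Matrix (Fin d) (Fin d) ℂ} {e : Fin d → Fin d → ℂ}
    (hσ : ∀ k, (σ k).IsHermitian) (he : IsOrthonormal e) :
    ((d : ℝ) - 1) / d ≤ (((pureState (ghz d) - qcState α σ e) *
        (pureState (ghz d) - qcState α σ e)).trace).re := by
  simp_rw [qcState, ← smul_kronecker]
  rw [trace_sq_ghz_sub_sum_kronecker hd _ he, Complex.add_re, Complex.re_sum]
  refine le_add_of_le_of_nonneg (by norm_cast) (sum_nonneg fun k _ => ?_)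
  refine IsHermitian.re_trace_mul_self_nonneg (((hσ k).smul ?_).sub
    ((posSemidef_vecMulVec_self_star (e k)).1.transpose.smul ?_))
  · exact isSelfAdjoint_iff.mpr (Complex.conj_ofReal _)
  · exact (IsSelfAdjoint.natCast d).inv₀

lemma isQCState_qcState_transpose (hd : 0 < d) {e : Fin d → Fin d → ℂ} (he : IsOrthonormal e) :
    IsQCState (qcState (fun _ => (d : ℝ)⁻¹) (fun k => (pureState (e k))ᵀ) e) := by
  refine ⟨fun _ => (d : ℝ)⁻¹, fun k => (pureState (e k))ᵀ, e, fun _ => by positivity, ?_,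
    fun k => (isState_pureState (by rw [he, if_pos rfl])).transpose, he, rfl⟩
  rw [sum_const, card_univ, Fintype.card_fin, nsmul_eq_mul]
  exact mul_inv_cancel₀ (by exact_mod_cast hd.ne')

lemma re_trace_sq_ghz_sub_qcState_transpose (hd : 0 < d) {e : Fin d → Fin d → ℂ}
    (he : IsOrthonormal e) :
    (((pureState (ghz d) - qcState (fun _ => (d : ℝ)⁻¹) (fun k => (pureState (e k))ᵀ) e) *
        (pureState (ghz d) - qcState (fun _ => (d : ℝ)⁻¹) (fun k => (pureState (e k))ᵀ) e)
        ).trace).re = ((d : ℝ) - 1) / d := by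
  simp_rw [qcState, ← smul_kronecker]
  rw [trace_sq_ghz_sub_sum_kronecker hd _ he]
  push_cast
  simp only [sub_self, zero_mul, trace_zero, sum_const_zero, add_zero]
  norm_cast

end GHZ

/-- for the GHZ state `|GHZ⟩ = (1/√d) Σ_k |k⟩⊗|k⟩` on `ℂ^d⊗ℂ^d`,
`D_g(ρ_ghz) = (d-1)/d`. -/
theorem stmt6 {d : ℕ} (hd : 2 ≤ d) :
    Dg (pureState (fun p : Fin d × Fin d =>
        if p.1 = p.2 then (((Real.sqrt d)⁻¹ : ℝ) : ℂ) else 0)) = ((d : ℝ) - 1) / d := by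
  have hd0 : 0 < d := by omega
  refine IsLeast.csInf_eq ⟨?_, ?_⟩
  · exact ⟨_, isQCState_qcState_transpose hd0 isOrthonormal_single,
      (re_trace_sq_ghz_sub_qcState_transpose hd0 isOrthonormal_single).symm⟩
  · rintro x ⟨χ, ⟨α, σ, e, -, -, hσ, he, rfl⟩, rfl⟩
    exact sub_one_div_le_re_trace_sq_ghz_sub_qcState hd0 α (fun k => (hσ k).1.1) he
end

section
/- For every separable two-qudit state ρ_sep = Σ_k β_k ρ₁^(k)⊗ρ₂^(k) on ℂ^d⊗ℂ^d (d ≥ 2), where β_k ≥ 0, Σ_k β_k = 1 and each ρ₁^(k), ρ₂^(k) is a state on ℂ^d, the geometric quantum discord satisfies D_g(ρ_sep) ≤ ((d−1)/d)². -/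
open Matrix Finset
open scoped Kronecker ComplexOrder

/-!
Take for `χ` the product `ρ_A ⊗ ρ_B` of the two marginals of `ρ = Σ β_k ρ₁^(k) ⊗ ρ₂^(k)`; it is
quantum-classical because `ρ_B` is diagonal in its own eigenbasis. Expanding,
`ρ - ρ_A ⊗ ρ_B = Σ β_k (ρ₁^(k) - ρ_A) ⊗ (ρ₂^(k) - ρ_B)`, so by the triangle inequality, the
multiplicativity of the Hilbert–Schmidt norm on Kronecker products and `ab ≤ (a² + b²)/2`, the
norm of `ρ - χ` is at most the mean of the two weighted variances `Σ β_k ‖ρᵢ^(k) - ρ̄ᵢ‖²`. Such a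
variance equals `Σ β_k ‖ρᵢ^(k)‖² - ‖ρ̄ᵢ‖²`, and the purity `‖σ‖² = tr σ²` of a state on `ℂ^d` lies
in `[1/d, 1]`, so each variance is at most `1 - 1/d = (d-1)/d`.
-/

open scoped InnerProductSpace

lemma sum_mul_norm_sub_sum_smul_sq {𝕜 E ι : Type*} [RCLike 𝕜] [NormedAddCommGroup E]
    [InnerProductSpace 𝕜 E] (s : Finset ι) (w : ι → ℝ) (hw : ∑ i ∈ s, w i = 1) (x : ι → E) :
    ∑ i ∈ s, w i * ‖x i - ∑ j ∈ s, (w j : 𝕜) • x j‖ ^ 2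
      = ∑ i ∈ s, w i * ‖x i‖ ^ 2 - ‖∑ j ∈ s, (w j : 𝕜) • x j‖ ^ 2 := by
  set μ := ∑ j ∈ s, (w j : 𝕜) • x j
  have hμ : ∑ i ∈ s, w i * RCLike.re ⟪x i, μ⟫_𝕜 = ‖μ‖ ^ 2 := by
    simp only [@norm_sq_eq_re_inner 𝕜, μ, sum_inner, inner_smul_left, RCLike.conj_ofReal,
      RCLike.re_ofReal_mul, map_sum]
  simp only [@norm_sub_sq 𝕜, mul_add, mul_sub, Finset.sum_add_distrib, Finset.sum_sub_distrib,
    ← Finset.sum_mul, hw, mul_left_comm _ (2 : ℝ), ← Finset.mul_sum, hμ]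
  ring

namespace Matrix

lemma sum_smul_kronecker_sub_kronecker {ι R l m n p : Type*} [CommRing R]
    (s : Finset ι) (β : ι → R) (hβ : ∑ i ∈ s, β i = 1) (A : ι → Matrix l m R)
    (B : ι → Matrix n p R) :
    ∑ i ∈ s, β i • (A i ⊗ₖ B i) - (∑ i ∈ s, β i • A i) ⊗ₖ (∑ i ∈ s, β i • B i)
      = ∑ i ∈ s, β i • ((A i - ∑ j ∈ s, β j • A j) ⊗ₖ (B i - ∑ j ∈ s, β j • B j)) := by
  ext ⟨a, b⟩ ⟨c, e⟩
  simp only [sub_apply, sum_apply, smul_apply, kronecker_apply, smul_eq_mul]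
  set x := ∑ j ∈ s, β j * A j a c
  set y := ∑ j ∈ s, β j * B j b e
  have expand : ∀ i, β i * ((A i a c - x) * (B i b e - y))
      = β i * (A i a c * B i b e) - y * (β i * A i a c) - x * (β i * B i b e) + x * y * β i :=
    fun i => by ring
  simp only [expand, Finset.sum_add_distrib, Finset.sum_sub_distrib, ← Finset.mul_sum, hβ]
  ring

variable {𝕜 n : Type*} [RCLike 𝕜] [Fintype n] [DecidableEq n] {A : Matrix n n 𝕜}

lemma IsHermitian.trace_mul_self_eq_sum_eigenvalues_sq (hA : A.IsHermitian) :
    (A * A).trace = ∑ i, ((hA.eigenvalues i ^ 2 : ℝ) : 𝕜) := by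
  conv_lhs => rw [hA.spectral_theorem, ← map_mul, Unitary.conjStarAlgAut_apply, trace_mul_cycle,
    Unitary.coe_star_mul_self, one_mul, diagonal_mul_diagonal, trace_diagonal]
  simp [sq]

lemma IsHermitian.sq_re_trace_le_card_mul_re_trace_mul_self (hA : A.IsHermitian) :
    RCLike.re A.trace ^ 2 ≤ Fintype.card n * RCLike.re (A * A).trace := by
  rw [hA.trace_eq_sum_eigenvalues, hA.trace_mul_self_eq_sum_eigenvalues_sq]
  simp only [map_sum, RCLike.ofReal_re]
  exact_mod_cast sq_sum_le_card_mul_sum_sq (s := Finset.univ) (f := hA.eigenvalues)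

lemma PosSemidef.re_trace_mul_self_le_sq_re_trace (hA : A.PosSemidef) :
    RCLike.re (A * A).trace ≤ RCLike.re A.trace ^ 2 := by
  rw [hA.1.trace_eq_sum_eigenvalues, hA.1.trace_mul_self_eq_sum_eigenvalues_sq]
  simpa only [map_sum, RCLike.ofReal_re] using
    Finset.sum_sq_le_sq_sum_of_nonneg fun i _ => hA.eigenvalues_nonneg i

lemma IsHermitian.eq_sum_smul_pureState {A : Matrix n n ℂ} (hA : A.IsHermitian) :
    A = ∑ k, (hA.eigenvalues k : ℂ) • pureState ⇑(hA.eigenvectorBasis k) := by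
  conv_lhs => rw [hA.spectral_theorem]
  ext i j
  simp only [diagonal, Complex.coe_algebraMap, Function.comp_apply, Unitary.conjStarAlgAut_apply,
    mul_apply, eigenvectorUnitary_apply, of_apply, mul_ite, mul_zero, sum_ite_eq', mem_univ,
    ↓reduceIte, star_apply, RCLike.star_def, pureState, Complex.coe_smul, sum_apply, smul_apply,
    vecMulVec_apply, Pi.star_apply, Complex.real_smul]
  exact Finset.sum_congr rfl fun _ _ => by ring

end Matrix

section HilbertSchmidt

variable {ι l m n p : Type*}

/-- Vectorisation of a matrix, carrying the Hilbert–Schmidt inner product `tr (Xᴴ Y)` to the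
Euclidean one. -/
def hsVec : Matrix m n ℂ →ₗ[ℂ] EuclideanSpace ℂ (m × n) where
  toFun X := WithLp.toLp 2 fun q => X q.1 q.2
  map_add' _ _ := rfl
  map_smul' _ _ := rfl

@[simp]
lemma hsVec_apply (X : Matrix m n ℂ) (q : m × n) : hsVec X q = X q.1 q.2 := rfl

variable [Fintype l] [Fintype m] [Fintype n] [Fintype p]

lemma inner_hsVec (X Y : Matrix m n ℂ) : ⟪hsVec X, hsVec Y⟫_ℂ = (Xᴴ * Y).trace := by
  simp only [PiLp.inner_apply, hsVec_apply, RCLike.inner_apply, Fintype.sum_prod_type, trace,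
    diag_apply, Matrix.mul_apply, conjTranspose_apply, RCLike.star_def]
  rw [Finset.sum_comm]
  simp [mul_comm]

lemma norm_hsVec_sq (X : Matrix m n ℂ) : ‖hsVec X‖ ^ 2 = ∑ i, ∑ j, ‖X i j‖ ^ 2 := by
  rw [EuclideanSpace.norm_sq_eq, Fintype.sum_prod_type]
  rfl

lemma norm_hsVec_kronecker (A : Matrix l m ℂ) (B : Matrix n p ℂ) :
    ‖hsVec (A ⊗ₖ B)‖ = ‖hsVec A‖ * ‖hsVec B‖ := by
  refine (pow_left_inj₀ (norm_nonneg _) (by positivity) two_ne_zero).mp ?_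
  simp only [mul_pow, norm_hsVec_sq, Fintype.sum_prod_type, Matrix.kronecker_apply, norm_mul,
    Finset.sum_mul_sum]

lemma Matrix.IsHermitian.re_trace_mul_self_eq_norm_hsVec_sq {X : Matrix n n ℂ}
    (hX : X.IsHermitian) : (X * X).trace.re = ‖hsVec X‖ ^ 2 := by
  rw [@norm_sq_eq_re_inner ℂ, inner_hsVec, hX.eq]
  rfl

lemma norm_hsVec_sum_smul_kronecker_le (s : Finset ι) {β : ι → ℝ} (hβ : ∀ i ∈ s, 0 ≤ β i)
    (A : ι → Matrix l m ℂ) (B : ι → Matrix n p ℂ) :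
    ‖hsVec (∑ i ∈ s, (β i : ℂ) • (A i ⊗ₖ B i))‖
      ≤ (∑ i ∈ s, β i * ‖hsVec (A i)‖ ^ 2 + ∑ i ∈ s, β i * ‖hsVec (B i)‖ ^ 2) / 2 := by
  rw [map_sum, ← Finset.sum_add_distrib, Finset.sum_div]
  refine (norm_sum_le _ _).trans (Finset.sum_le_sum fun i hi => ?_)
  rw [map_smul, norm_smul, Complex.norm_real, Real.norm_of_nonneg (hβ i hi),
    norm_hsVec_kronecker]
  nlinarith [hβ i hi, mul_nonneg (hβ i hi) (sq_nonneg (‖hsVec (A i)‖ - ‖hsVec (B i)‖))]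

end HilbertSchmidt

section States

variable {ι m n : Type*} [Fintype m] [Fintype n]

lemma IsState.kronecker {ρ : Matrix m m ℂ} {σ : Matrix n n ℂ} (hρ : IsState ρ)
    (hσ : IsState σ) : IsState (ρ ⊗ₖ σ) :=
  ⟨hρ.1.kronecker hσ.1, by rw [trace_kronecker, hρ.2, hσ.2, one_mul]⟩

lemma IsState.sum_smul {s : Finset ι} {β : ι → ℝ} (hβ : ∀ i ∈ s, 0 ≤ β i)
    (hβ1 : ∑ i ∈ s, β i = 1) {ρ : ι → Matrix n n ℂ} (hρ : ∀ i ∈ s, IsState (ρ i)) :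
    IsState (∑ i ∈ s, (β i : ℂ) • ρ i) := by
  refine ⟨posSemidef_sum s fun i hi => (hρ i hi).1.smul (Complex.zero_le_real.mpr (hβ i hi)), ?_⟩
  simp only [trace_sum, trace_smul, smul_eq_mul]
  rw [Finset.sum_congr rfl fun i hi => by rw [(hρ i hi).2, mul_one]]
  exact_mod_cast hβ1

lemma IsState.norm_hsVec_sq_le_one {ρ : Matrix n n ℂ} (hρ : IsState ρ) : ‖hsVec ρ‖ ^ 2 ≤ 1 := by
  classical
  rw [← hρ.1.1.re_trace_mul_self_eq_norm_hsVec_sq]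
  simpa [hρ.2] using hρ.1.re_trace_mul_self_le_sq_re_trace

lemma inv_card_le_norm_hsVec_sq {ρ : Matrix n n ℂ} (hρ : ρ.IsHermitian) (htr : ρ.trace = 1) :
    (Fintype.card n : ℝ)⁻¹ ≤ ‖hsVec ρ‖ ^ 2 := by
  classical
  rcases (Fintype.card n).eq_zero_or_pos with hn | hn
  · simp [hn]
  have h := hρ.sq_re_trace_le_card_mul_re_trace_mul_self
  simp only [htr, RCLike.re_to_complex, hρ.re_trace_mul_self_eq_norm_hsVec_sq] at h
  rw [inv_le_iff_one_le_mul₀' (by exact_mod_cast hn)]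
  simpa using h

lemma sum_mul_norm_hsVec_sub_mean_sq_le (s : Finset ι) {β : ι → ℝ} (hβ : ∀ i ∈ s, 0 ≤ β i)
    (hβ1 : ∑ i ∈ s, β i = 1) {ρ : ι → Matrix n n ℂ} (hρ : ∀ i ∈ s, IsState (ρ i)) :
    ∑ i ∈ s, β i * ‖hsVec (ρ i - ∑ j ∈ s, (β j : ℂ) • ρ j)‖ ^ 2 ≤ 1 - (Fintype.card n : ℝ)⁻¹ := by
  have hmean := IsState.sum_smul hβ hβ1 hρ
  have hpurity : ∑ i ∈ s, β i * ‖hsVec (ρ i)‖ ^ 2 ≤ 1 :=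
    calc ∑ i ∈ s, β i * ‖hsVec (ρ i)‖ ^ 2 ≤ ∑ i ∈ s, β i * 1 :=
          Finset.sum_le_sum fun i hi =>
            mul_le_mul_of_nonneg_left (hρ i hi).norm_hsVec_sq_le_one (hβ i hi)
      _ = 1 := by rw [← Finset.sum_mul, hβ1, one_mul]
  have hmix := inv_card_le_norm_hsVec_sq hmean.1.1 hmean.2
  simp only [map_sub, map_sum, map_smul] at hmix ⊢
  calc _ = ∑ i ∈ s, β i * ‖hsVec (ρ i)‖ ^ 2 - ‖∑ j ∈ s, (β j : ℂ) • hsVec (ρ j)‖ ^ 2 :=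
        sum_mul_norm_sub_sum_smul_sq s β hβ1 _
    _ ≤ 1 - (Fintype.card n : ℝ)⁻¹ := by linarith

lemma norm_hsVec_sum_smul_kronecker_sub_kronecker_le (s : Finset ι) {β : ι → ℝ}
    (hβ : ∀ i ∈ s, 0 ≤ β i) (hβ1 : ∑ i ∈ s, β i = 1) {ρ₁ : ι → Matrix m m ℂ}
    {ρ₂ : ι → Matrix n n ℂ} (h₁ : ∀ i ∈ s, IsState (ρ₁ i)) (h₂ : ∀ i ∈ s, IsState (ρ₂ i)) :
    ‖hsVec (∑ i ∈ s, (β i : ℂ) • (ρ₁ i ⊗ₖ ρ₂ i)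
        - (∑ i ∈ s, (β i : ℂ) • ρ₁ i) ⊗ₖ (∑ i ∈ s, (β i : ℂ) • ρ₂ i))‖
      ≤ ((1 - (Fintype.card m : ℝ)⁻¹) + (1 - (Fintype.card n : ℝ)⁻¹)) / 2 := by
  have hβ1' : ∑ i ∈ s, (β i : ℂ) = 1 := by exact_mod_cast hβ1
  rw [Matrix.sum_smul_kronecker_sub_kronecker s _ hβ1']
  refine (norm_hsVec_sum_smul_kronecker_le s hβ _ _).trans ?_
  gcongr
  exacts [sum_mul_norm_hsVec_sub_mean_sq_le s hβ hβ1 h₁,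
    sum_mul_norm_hsVec_sub_mean_sq_le s hβ hβ1 h₂]

end States

section QuantumClassical

variable {d₁ d₂ : ℕ}

lemma IsQCState.posSemidef {χ : Matrix (Fin d₁ × Fin d₂) (Fin d₁ × Fin d₂) ℂ}
    (hχ : IsQCState χ) : χ.PosSemidef := by
  obtain ⟨α, σ, e, hα, -, hσ, -, rfl⟩ := hχ
  exact posSemidef_sum _ fun k _ => ((hσ k).1.kronecker (posSemidef_vecMulVec_self_star _)).smul
    (Complex.zero_le_real.mpr (hα k))

lemma IsState.isQCState_kronecker {σ : Matrix (Fin d₁) (Fin d₁) ℂ}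
    {τ : Matrix (Fin d₂) (Fin d₂) ℂ} (hσ : IsState σ) (hτ : IsState τ) :
    IsQCState (σ ⊗ₖ τ) := by
  obtain ⟨hτ, hτ1⟩ := hτ
  refine ⟨hτ.1.eigenvalues, fun _ => σ, fun k => ⇑(hτ.1.eigenvectorBasis k),
    hτ.eigenvalues_nonneg, ?_, fun _ => hσ, fun k l => ?_, ?_⟩
  · have h := hτ.1.trace_eq_sum_eigenvalues
    rw [hτ1, ← RCLike.ofReal_sum] at h
    simpa using congrArg RCLike.re h.symm
  · simpa [PiLp.inner_apply, mul_comm] using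
      orthonormal_iff_ite.mp hτ.1.eigenvectorBasis.orthonormal k l
  · conv_lhs => rw [hτ.1.eq_sum_smul_pureState]
    ext ⟨i, j⟩ ⟨k, l⟩
    simp [Matrix.sum_apply, Finset.mul_sum, mul_left_comm]

lemma Dg_le_of_isQCState {ρ χ : Matrix (Fin d₁ × Fin d₂) (Fin d₁ × Fin d₂) ℂ}
    (hρ : ρ.IsHermitian) (hχ : IsQCState χ) : Dg ρ ≤ ((ρ - χ) * (ρ - χ)).trace.re := by
  refine csInf_le ⟨0, ?_⟩ ⟨χ, hχ, rfl⟩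
  rintro _ ⟨χ', hχ', rfl⟩
  rw [(hρ.sub hχ'.posSemidef.1).re_trace_mul_self_eq_norm_hsVec_sq]
  positivity

end QuantumClassical

/-- for every separable two-qudit state
`ρ_sep = Σ_k β_k ρ₁^{(k)} ⊗ ρ₂^{(k)}` on `ℂ^d⊗ℂ^d`, `D_g(ρ_sep) ≤ ((d-1)/d)²`. -/
theorem stmt12 {d m : ℕ} (hd : 2 ≤ d) (β : Fin m → ℝ) (hβ : ∀ k, 0 ≤ β k)
    (hβ1 : ∑ k, β k = 1) (ρ₁ ρ₂ : Fin m → Matrix (Fin d) (Fin d) ℂ)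
    (h₁ : ∀ k, IsState (ρ₁ k)) (h₂ : ∀ k, IsState (ρ₂ k)) :
    Dg (∑ k, (β k : ℂ) • (ρ₁ k ⊗ₖ ρ₂ k)) ≤ (((d : ℝ) - 1) / d) ^ 2 := by
  have hβ' : ∀ k ∈ Finset.univ, 0 ≤ β k := fun k _ => hβ k
  have hρ := IsState.sum_smul hβ' hβ1 fun k _ => (h₁ k).kronecker (h₂ k)
  have hχ := (IsState.sum_smul hβ' hβ1 fun k _ => h₁ k).isQCState_kronecker
    (IsState.sum_smul hβ' hβ1 fun k _ => h₂ k)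
  have hdist := norm_hsVec_sum_smul_kronecker_sub_kronecker_le Finset.univ hβ' hβ1
    (fun k _ => h₁ k) (fun k _ => h₂ k)
  rw [Fintype.card_fin, add_self_div_two] at hdist
  have hd0 : (d : ℝ) ≠ 0 := Nat.cast_ne_zero.mpr (by omega)
  calc Dg _ ≤ _ := Dg_le_of_isQCState hρ.1.1 hχ
    _ = _ := (hρ.1.1.sub hχ.posSemidef.1).re_trace_mul_self_eq_norm_hsVec_sq
    _ ≤ (1 - (d : ℝ)⁻¹) ^ 2 := by gcongr
    _ = (((d : ℝ) - 1) / d) ^ 2 := by field_simp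
end

section
/- For every two-qudit state ρ on ℂ^{d₁}⊗ℂ^{d₂} (d₁,d₂ ≥ 2) and any Bloch bases Υ₁, Υ₂, one has ((d₁−1)/(d₁d₂))‖r₁‖² + ((d₂−1)/(d₁d₂))‖r₂‖² + (1/4)Σ_{i,j}(T_ρ^{(ij)})² ≤ (d₁d₂−1)/(d₁d₂), where r₁, r₂ are the Bloch vectors of the reduced states ρ₁ = tr₂ρ, ρ₂ = tr₁ρ and T_ρ is the correlation matrix of ρ; moreover equality holds if ρ is a pure state. -/
open Matrix Finset
open scoped Kronecker ComplexOrder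

/-!
Completing each Bloch basis by the identity matrix gives a family of `d²` Hermitian matrices,
pairwise orthogonal for `(X, Y) ↦ tr[XY]`, hence an orthogonal basis of all `d × d` matrices;
their Kronecker products form an orthogonal basis for the two-qudit system. Expanding `ρ` in it
(Parseval) splits the purity `tr[ρ²]` into the identity term `1/(d₁d₂)`, the two local Bloch
terms and the correlation term, so the left-hand side equals `tr[ρ²] - 1/(d₁d₂)`. Finally
`tr[ρ²] = ∑ λᵢ² ≤ (∑ λᵢ)² = 1` for the eigenvalues `λᵢ ≥ 0` of `ρ`, with equality when `ρ² = ρ`.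
-/

namespace Matrix

variable {ι κ m n R : Type*} [Fintype m] [Fintype n]

def IsTraceOrthogonal [Semiring R] [DecidableEq ι] (B : ι → Matrix m m R) (w : ι → R) : Prop :=
  ∀ x y, (B x * B y).trace = if x = y then w x else 0

theorem IsTraceOrthogonal.kronecker [CommSemiring R] [DecidableEq ι] [DecidableEq κ]
    {A : ι → Matrix m m R} {u : ι → R} {B : κ → Matrix n n R} {v : κ → R}
    (hA : IsTraceOrthogonal A u) (hB : IsTraceOrthogonal B v) :
    IsTraceOrthogonal (fun x : ι × κ => A x.1 ⊗ₖ B x.2) (fun x => u x.1 * v x.2) := by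
  rintro ⟨a, b⟩ ⟨a', b'⟩
  rw [← mul_kronecker_mul, trace_kronecker, hA, hB]
  by_cases ha : a = a' <;> by_cases hb : b = b' <;> simp [ha, hb]

section Field

variable {K : Type*} [Field K] [Fintype ι] [DecidableEq ι] {B : ι → Matrix m m K} {w : ι → K}

theorem IsTraceOrthogonal.trace_mul_linearCombination (hB : IsTraceOrthogonal B w)
    (c : ι → K) (y : ι) :
    (B y * Fintype.linearCombination K B c).trace = w y * c y := by
  simp [Fintype.linearCombination_apply, Finset.mul_sum, trace_sum, hB y, mul_comm]

/-- Trace-orthogonality with nonzero weights makes the family linearly independent, and with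
`(card m)²` members it is then a basis. -/
theorem IsTraceOrthogonal.eq_sum (hB : IsTraceOrthogonal B w) (hw : ∀ x, w x ≠ 0)
    (hcard : Fintype.card ι = Fintype.card m * Fintype.card m) (X : Matrix m m K) :
    X = ∑ x, ((w x)⁻¹ * (B x * X).trace) • B x := by
  have hinj : Function.Injective (Fintype.linearCombination K B) := by
    rw [← LinearMap.ker_eq_bot, LinearMap.ker_eq_bot']
    intro c hc
    funext y
    simpa [hc, hw y] using hB.trace_mul_linearCombination c y
  obtain ⟨c, rfl⟩ := (LinearMap.injective_iff_surjective_of_finrank_eq_finrank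
    (by simp [Module.finrank_matrix, hcard])).mp hinj X
  simp only [hB.trace_mul_linearCombination, inv_mul_cancel_left₀ (hw _)]
  exact Fintype.linearCombination_apply K B c

theorem IsTraceOrthogonal.trace_mul_self (hB : IsTraceOrthogonal B w) (hw : ∀ x, w x ≠ 0)
    (hcard : Fintype.card ι = Fintype.card m * Fintype.card m) (X : Matrix m m K) :
    (X * X).trace = ∑ x, (w x)⁻¹ * (B x * X).trace ^ 2 := by
  nth_rw 1 [hB.eq_sum hw hcard X]
  simp [Finset.sum_mul, trace_sum, sq, mul_assoc]

end Field

section RCLike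

variable {𝕜 : Type*} [RCLike 𝕜]

theorem IsHermitian.ofReal_re_trace_mul {A X : Matrix m m 𝕜} (hA : A.IsHermitian)
    (hX : X.IsHermitian) : (RCLike.re (A * X).trace : 𝕜) = (A * X).trace := by
  rw [← RCLike.conj_eq_iff_re, ← RCLike.star_def, ← trace_conjTranspose, conjTranspose_mul,
    hA.eq, hX.eq, trace_mul_comm]

theorem IsTraceOrthogonal.re_trace_mul_self [Fintype ι] [DecidableEq ι]
    {B : ι → Matrix m m 𝕜} {w : ι → ℝ} (hB : IsTraceOrthogonal B fun x => (w x : 𝕜))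
    (hw : ∀ x, w x ≠ 0) (hcard : Fintype.card ι = Fintype.card m * Fintype.card m)
    (hBH : ∀ x, (B x).IsHermitian) {X : Matrix m m 𝕜} (hX : X.IsHermitian) :
    RCLike.re (X * X).trace = ∑ x, (w x)⁻¹ * RCLike.re (B x * X).trace ^ 2 := by
  rw [hB.trace_mul_self (by simpa using hw) hcard X, map_sum]
  refine Finset.sum_congr rfl fun x _ => ?_
  rw [← (hBH x).ofReal_re_trace_mul hX]
  simp only [← RCLike.ofReal_inv, ← RCLike.ofReal_pow, ← RCLike.ofReal_mul, RCLike.ofReal_re]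

theorem IsHermitian.trace_mul_self [DecidableEq m] {A : Matrix m m 𝕜} (hA : A.IsHermitian) :
    (A * A).trace = ∑ i, (hA.eigenvalues i : 𝕜) ^ 2 := by
  conv_lhs => rw [hA.spectral_theorem, ← map_mul]
  rw [Unitary.conjStarAlgAut_apply, trace_mul_cycle, Unitary.coe_star_mul_self, one_mul,
    diagonal_mul_diagonal, trace_diagonal]
  simp [sq]

theorem PosSemidef.re_trace_mul_self_le [DecidableEq m] {A : Matrix m m 𝕜}
    (hA : A.PosSemidef) : RCLike.re (A * A).trace ≤ RCLike.re A.trace ^ 2 := by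
  rw [hA.1.trace_mul_self, hA.1.trace_eq_sum_eigenvalues]
  simp only [map_sum, ← RCLike.ofReal_pow, RCLike.ofReal_re]
  exact Finset.sum_sq_le_sq_sum_of_nonneg fun i _ => hA.eigenvalues_nonneg i

end RCLike

end Matrix

theorem IsState.re_trace_mul_self_le_one {n : Type*} [Fintype n] {ρ : Matrix n n ℂ}
    (hρ : IsState ρ) : (ρ * ρ).trace.re ≤ 1 := by
  classical
  simpa [hρ.2] using hρ.1.re_trace_mul_self_le

theorem pureState_mul_self {n : Type*} [Fintype n] {ψ : n → ℂ}
    (hψ : ∑ i, Complex.normSq (ψ i) = 1) : pureState ψ * pureState ψ = pureState ψ := by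
  have hnorm : star ψ ⬝ᵥ ψ = 1 := by
    simp only [dotProduct, Pi.star_apply, RCLike.star_def, ← Complex.normSq_eq_conj_mul_self]
    exact_mod_cast hψ
  rw [pureState, vecMulVec_mul_vecMulVec, hnorm, one_smul]

section PartialTrace

variable {d₁ d₂ : ℕ} (ρ : Matrix (Fin d₁ × Fin d₂) (Fin d₁ × Fin d₂) ℂ)

theorem trace_ptrace2 : (ptrace2 ρ).trace = ρ.trace := by
  simp [trace, ptrace2, Fintype.sum_prod_type]

theorem trace_kronecker_one_mul (A : Matrix (Fin d₁) (Fin d₁) ℂ) :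
    ((A ⊗ₖ (1 : Matrix (Fin d₂) (Fin d₂) ℂ)) * ρ).trace = (ptrace2 ρ * A).trace := by
  simp only [trace, diag_apply, mul_apply, kroneckerMap_apply, one_apply, mul_ite, mul_one,
    mul_zero, ite_mul, zero_mul, Fintype.sum_prod_type, sum_ite_eq, mem_univ, ↓reduceIte, ptrace2,
    of_apply, sum_mul]
  conv_rhs => rw [Finset.sum_comm]; enter [2, j]; rw [Finset.sum_comm]
  simp only [mul_comm]

theorem trace_one_kronecker_mul (B : Matrix (Fin d₂) (Fin d₂) ℂ) :
    (((1 : Matrix (Fin d₁) (Fin d₁) ℂ) ⊗ₖ B) * ρ).trace = (ptrace1 ρ * B).trace := by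
  simp only [trace, diag_apply, mul_apply, kroneckerMap_apply, one_apply, ite_mul, one_mul,
    zero_mul, Fintype.sum_prod_type, sum_ite_irrel, sum_const_zero, sum_ite_eq, mem_univ,
    ↓reduceIte, ptrace1, of_apply, sum_mul]
  conv_lhs => rw [Finset.sum_comm]; enter [2, j]; rw [Finset.sum_comm]
  conv_rhs => rw [Finset.sum_comm]
  simp only [mul_comm]

end PartialTrace

section BlochFrame

variable {d : ℕ} {Υ : Fin (d ^ 2 - 1) → Matrix (Fin d) (Fin d) ℂ}

def blochFrame (Υ : Fin (d ^ 2 - 1) → Matrix (Fin d) (Fin d) ℂ) :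
    Fin (d ^ 2 - 1) ⊕ Unit → Matrix (Fin d) (Fin d) ℂ :=
  Sum.elim Υ fun _ => 1

def blochFrameWeight (d : ℕ) : Fin (d ^ 2 - 1) ⊕ Unit → ℝ :=
  Sum.elim (fun _ => 2) fun _ => d

theorem blochFrameWeight_ne_zero (hd : 0 < d) (a : Fin (d ^ 2 - 1) ⊕ Unit) :
    blochFrameWeight d a ≠ 0 := by
  rcases a with _ | _ <;> simp [blochFrameWeight, hd.ne']

theorem card_fin_sq_sub_one_sum_unit (hd : 0 < d) :
    Fintype.card (Fin (d ^ 2 - 1) ⊕ Unit) = d * d := by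
  simp only [Fintype.card_sum, Fintype.card_fin, Fintype.card_unit]
  rw [Nat.sub_add_cancel (Nat.one_le_pow _ _ hd), sq]

theorem IsBlochBasis.isTraceOrthogonal_blochFrame (hΥ : IsBlochBasis d Υ) :
    IsTraceOrthogonal (blochFrame Υ) fun a => (blochFrameWeight d a : ℂ) := by
  obtain ⟨-, -, htr, horth⟩ := hΥ
  rintro (k | _) (k' | _) <;> simp [blochFrame, blochFrameWeight, horth, htr]

theorem IsBlochBasis.isHermitian_blochFrame (hΥ : IsBlochBasis d Υ)
    (a : Fin (d ^ 2 - 1) ⊕ Unit) : (blochFrame Υ a).IsHermitian := by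
  rcases a with k | _
  exacts [hΥ.2.1 k, isHermitian_one]

end BlochFrame

theorem sum_blochVector_sq {d : ℕ} (ρ : Matrix (Fin d) (Fin d) ℂ)
    (Υ : Fin (d ^ 2 - 1) → Matrix (Fin d) (Fin d) ℂ) :
    ∑ k, blochVector ρ Υ k ^ 2 = d / (2 * ((d : ℝ) - 1)) * ∑ k, (ρ * Υ k).trace.re ^ 2 := by
  have hnonneg : 0 ≤ (d : ℝ) / (2 * ((d : ℝ) - 1)) := by
    rcases Nat.eq_zero_or_pos d with rfl | hd
    · simp
    · have : (1 : ℝ) ≤ d := by exact_mod_cast hd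
      positivity
  simp only [blochVector, mul_pow, Real.sq_sqrt hnonneg, Finset.mul_sum]

theorem re_trace_mul_self_eq_bloch_expansion {d₁ d₂ : ℕ} (hd₁ : 0 < d₁) (hd₂ : 0 < d₂)
    {ρ : Matrix (Fin d₁ × Fin d₂) (Fin d₁ × Fin d₂) ℂ} (hρ : ρ.IsHermitian) (hρ₁ : ρ.trace = 1)
    {Υ₁ : Fin (d₁ ^ 2 - 1) → Matrix (Fin d₁) (Fin d₁) ℂ} (hΥ₁ : IsBlochBasis d₁ Υ₁)
    {Υ₂ : Fin (d₂ ^ 2 - 1) → Matrix (Fin d₂) (Fin d₂) ℂ} (hΥ₂ : IsBlochBasis d₂ Υ₂) :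
    (ρ * ρ).trace.re = ((d₁ : ℝ) * d₂)⁻¹
      + (2 * (d₂ : ℝ))⁻¹ * ∑ i, (ptrace2 ρ * Υ₁ i).trace.re ^ 2
      + ((d₁ : ℝ) * 2)⁻¹ * ∑ j, (ptrace1 ρ * Υ₂ j).trace.re ^ 2
      + (2 * 2 : ℝ)⁻¹ * ∑ i, ∑ j, corrMatrix ρ Υ₁ Υ₂ i j ^ 2 := by
  have hB : IsTraceOrthogonal
      (fun x : (Fin (d₁ ^ 2 - 1) ⊕ Unit) × (Fin (d₂ ^ 2 - 1) ⊕ Unit) =>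
        blochFrame Υ₁ x.1 ⊗ₖ blochFrame Υ₂ x.2)
      fun x => ((blochFrameWeight d₁ x.1 * blochFrameWeight d₂ x.2 : ℝ) : ℂ) := by
    simpa using hΥ₁.isTraceOrthogonal_blochFrame.kronecker hΥ₂.isTraceOrthogonal_blochFrame
  have hBH : ∀ x : (Fin (d₁ ^ 2 - 1) ⊕ Unit) × (Fin (d₂ ^ 2 - 1) ⊕ Unit),
      (blochFrame Υ₁ x.1 ⊗ₖ blochFrame Υ₂ x.2).IsHermitian := fun x => by
    rw [IsHermitian, conjTranspose_kronecker, (hΥ₁.isHermitian_blochFrame x.1).eq,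
      (hΥ₂.isHermitian_blochFrame x.2).eq]
  have hcard : Fintype.card ((Fin (d₁ ^ 2 - 1) ⊕ Unit) × (Fin (d₂ ^ 2 - 1) ⊕ Unit)) =
      Fintype.card (Fin d₁ × Fin d₂) * Fintype.card (Fin d₁ × Fin d₂) := by
    simp only [Fintype.card_prod, card_fin_sq_sub_one_sum_unit hd₁,
      card_fin_sq_sub_one_sum_unit hd₂, Fintype.card_fin]
    ring
  have hw : ∀ x : (Fin (d₁ ^ 2 - 1) ⊕ Unit) × (Fin (d₂ ^ 2 - 1) ⊕ Unit),
      blochFrameWeight d₁ x.1 * blochFrameWeight d₂ x.2 ≠ 0 := fun x =>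
    mul_ne_zero (blochFrameWeight_ne_zero hd₁ x.1) (blochFrameWeight_ne_zero hd₂ x.2)
  have hcorr i j : ((Υ₁ i ⊗ₖ Υ₂ j) * ρ).trace.re = corrMatrix ρ Υ₁ Υ₂ i j := by
    rw [trace_mul_comm]; rfl
  have hparseval := hB.re_trace_mul_self
    (w := fun x => blochFrameWeight d₁ x.1 * blochFrameWeight d₂ x.2) hw hcard hBH hρ
  simp only [RCLike.re_to_complex] at hparseval
  rw [hparseval]
  simp only [blochFrameWeight, blochFrame, Fintype.sum_prod_type, Fintype.sum_sum_type,
    Sum.elim_inl, Sum.elim_inr, univ_unique, PUnit.default_eq_unit, sum_singleton,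
    trace_kronecker_one_mul, trace_one_kronecker_mul, hcorr, mul_one,
    trace_ptrace2, hρ₁, Complex.one_re, one_pow, sum_add_distrib, mul_sum]
  ring

theorem weighted_bloch_sum_eq_re_trace_mul_self_sub {d₁ d₂ : ℕ} (hd₁ : 2 ≤ d₁) (hd₂ : 2 ≤ d₂)
    {ρ : Matrix (Fin d₁ × Fin d₂) (Fin d₁ × Fin d₂) ℂ} (hρ : ρ.IsHermitian) (hρ₁ : ρ.trace = 1)
    {Υ₁ : Fin (d₁ ^ 2 - 1) → Matrix (Fin d₁) (Fin d₁) ℂ} (hΥ₁ : IsBlochBasis d₁ Υ₁)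
    {Υ₂ : Fin (d₂ ^ 2 - 1) → Matrix (Fin d₂) (Fin d₂) ℂ} (hΥ₂ : IsBlochBasis d₂ Υ₂) :
    ((d₁ : ℝ) - 1) / (d₁ * d₂) * (∑ i, blochVector (ptrace2 ρ) Υ₁ i ^ 2)
      + ((d₂ : ℝ) - 1) / (d₁ * d₂) * (∑ j, blochVector (ptrace1 ρ) Υ₂ j ^ 2)
      + (4 : ℝ)⁻¹ * (∑ i, ∑ j, corrMatrix ρ Υ₁ Υ₂ i j ^ 2)
      = (ρ * ρ).trace.re - 1 / (d₁ * d₂) := by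
  have h₁ : (2 : ℝ) ≤ d₁ := by exact_mod_cast hd₁
  have h₂ : (2 : ℝ) ≤ d₂ := by exact_mod_cast hd₂
  have : (d₁ : ℝ) - 1 ≠ 0 := by linarith
  have : (d₂ : ℝ) - 1 ≠ 0 := by linarith
  rw [re_trace_mul_self_eq_bloch_expansion (by omega) (by omega) hρ hρ₁ hΥ₁ hΥ₂,
    sum_blochVector_sq, sum_blochVector_sq]
  field_simp
  ring

/-- `((d₁-1)/(d₁d₂))‖r₁‖² + ((d₂-1)/(d₁d₂))‖r₂‖² + (1/4)Σ_{i,j}(T_ρ^{ij})²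
≤ (d₁d₂-1)/(d₁d₂)`, with equality if `ρ` is pure. -/
theorem stmt14 {d₁ d₂ : ℕ} (hd₁ : 2 ≤ d₁) (hd₂ : 2 ≤ d₂)
    (ρ : Matrix (Fin d₁ × Fin d₂) (Fin d₁ × Fin d₂) ℂ) (hρ : IsState ρ)
    (Υ₁ : Fin (d₁ ^ 2 - 1) → Matrix (Fin d₁) (Fin d₁) ℂ) (hΥ₁ : IsBlochBasis d₁ Υ₁)
    (Υ₂ : Fin (d₂ ^ 2 - 1) → Matrix (Fin d₂) (Fin d₂) ℂ) (hΥ₂ : IsBlochBasis d₂ Υ₂) :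
    ((d₁ : ℝ) - 1) / (d₁ * d₂) * (∑ i, blochVector (ptrace2 ρ) Υ₁ i ^ 2)
      + ((d₂ : ℝ) - 1) / (d₁ * d₂) * (∑ j, blochVector (ptrace1 ρ) Υ₂ j ^ 2)
      + (4 : ℝ)⁻¹ * (∑ i, ∑ j, corrMatrix ρ Υ₁ Υ₂ i j ^ 2)
      ≤ ((d₁ : ℝ) * d₂ - 1) / (d₁ * d₂) ∧
    ((∃ ψ : Fin d₁ × Fin d₂ → ℂ, (∑ i, Complex.normSq (ψ i) = 1) ∧ ρ = pureState ψ) →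
      ((d₁ : ℝ) - 1) / (d₁ * d₂) * (∑ i, blochVector (ptrace2 ρ) Υ₁ i ^ 2)
        + ((d₂ : ℝ) - 1) / (d₁ * d₂) * (∑ j, blochVector (ptrace1 ρ) Υ₂ j ^ 2)
        + (4 : ℝ)⁻¹ * (∑ i, ∑ j, corrMatrix ρ Υ₁ Υ₂ i j ^ 2)
        = ((d₁ : ℝ) * d₂ - 1) / (d₁ * d₂)) := by
  have hd : (d₁ : ℝ) * d₂ ≠ 0 := by positivity
  rw [weighted_bloch_sum_eq_re_trace_mul_self_sub hd₁ hd₂ hρ.1.1 hρ.2 hΥ₁ hΥ₂, sub_div,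
    div_self hd]
  refine ⟨by linarith [hρ.re_trace_mul_self_le_one], ?_⟩
  rintro ⟨ψ, hψ, rfl⟩
  rw [pureState_mul_self hψ, hρ.2, Complex.one_re]
end
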